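/- arXiv:2503.06046 — 10 statements merged into one kernel-verified Lean document; each statement's English description precedes it below -/
import Mathlib

section
/- Under MTR and MTS, the sharp upper bound on the persuasion rate equals the ratio estimand: for positive reals P00, P10, P01, P11 summing to 1, the maximum of (q2+q5)/(1-P10-P11+q5) over q2, q5 satisfying 0 ≤ q5 ≤ P11 - P10(P01+P11)/(P00+P10) and 0 ≤ q2 ≤ P00 - P01(P10+P00)/(P01+P11) (assuming these upper limits are nonnegative) equals (P11/(P01+P11) - P10/(P00+P10)) / (P00/(P00+P10)). -/
/-!
The objective `(q₂ + q₅) / (c + q₅)`, with `c = 1 - P10 - P11 = P00 + P01`, is increasing in `q₂`,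
and also in `q₅` because `q₂ ≤ P00 ≤ c`. So the maximum sits at the corner where both MTS bounds
bind, and since `(P00 + P10) + (P01 + P11) = 1` the objective there simplifies to the ratio
estimand.
-/

theorem add_div_add_le_add_div_add {K : Type*} [Field K] [LinearOrder K] [IsStrictOrderedRing K]
    {c x x' t t' : K} (ht : 0 < c + t) (hx : x ≤ x')
    (htt' : t ≤ t') (hx'c : x' ≤ c) : (x + t) / (c + t) ≤ (x' + t') / (c + t') := by
  have ht' : 0 < c + t' := by linarith
  calc (x + t) / (c + t) ≤ (x' + t) / (c + t) := by gcongr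
    _ ≤ (x' + t') / (c + t') := by
      rw [div_le_div_iff₀ ht ht']
      nlinarith [mul_nonneg (sub_nonneg.2 htt') (sub_nonneg.2 hx'c)]

section PersuasionBound

variable {P00 P10 P01 P11 : ℝ}

theorem one_sub_sub_add_mtsBound_q5 (ha : P00 + P10 ≠ 0) (hsum : P00 + P10 + P01 + P11 = 1) :
    1 - P10 - P11 + (P11 - P10 * (P01 + P11) / (P00 + P10)) = P00 / (P00 + P10) := by
  field_simp
  linear_combination (-P10) * hsum

theorem mtsBound_q2_add_mtsBound_q5 (ha : P00 + P10 ≠ 0) (hb : P01 + P11 ≠ 0)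
    (hsum : P00 + P10 + P01 + P11 = 1) :
    P00 - P01 * (P10 + P00) / (P01 + P11) + (P11 - P10 * (P01 + P11) / (P00 + P10)) =
      P11 / (P01 + P11) - P10 / (P00 + P10) := by
  field_simp
  linear_combination (P11 * P00 - P10 * P01) * hsum

theorem mtsBound_q2_le (h01 : 0 ≤ P01) (hb : 0 ≤ P01 + P11) (ha : 0 ≤ P10 + P00) :
    P00 - P01 * (P10 + P00) / (P01 + P11) ≤ P00 := by
  have : 0 ≤ P01 * (P10 + P00) / (P01 + P11) := by positivity
  linarith

end PersuasionBound

/-- Under MTR and MTS, the sharp upper bound on the persuasion rate equals the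
ratio estimand: the maximum of `(q2+q5)/(1-P10-P11+q5)` over the feasible set
equals `(P11/(P01+P11) - P10/(P00+P10)) / (P00/(P00+P10))`. -/
theorem stmt0 (P00 P10 P01 P11 : ℝ)
    (h00 : 0 < P00) (h10 : 0 < P10) (h01 : 0 < P01) (h11 : 0 < P11)
    (hsum : P00 + P10 + P01 + P11 = 1)
    (hub5 : 0 ≤ P11 - P10 * (P01 + P11) / (P00 + P10))
    (hub2 : 0 ≤ P00 - P01 * (P10 + P00) / (P01 + P11)) :
    IsGreatest
      {x : ℝ | ∃ q2 q5 : ℝ,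
        0 ≤ q5 ∧ q5 ≤ P11 - P10 * (P01 + P11) / (P00 + P10) ∧
        0 ≤ q2 ∧ q2 ≤ P00 - P01 * (P10 + P00) / (P01 + P11) ∧
        x = (q2 + q5) / (1 - P10 - P11 + q5)}
      ((P11 / (P01 + P11) - P10 / (P00 + P10)) / (P00 / (P00 + P10))) := by
  have ha : 0 < P00 + P10 := by positivity
  have hb : 0 < P01 + P11 := by positivity
  rw [← mtsBound_q2_add_mtsBound_q5 ha.ne' hb.ne' hsum, ← one_sub_sub_add_mtsBound_q5 ha.ne' hsum]
  refine ⟨⟨_, _, hub5, le_rfl, hub2, le_rfl, rfl⟩, ?_⟩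
  rintro _ ⟨q2, q5, hq5, hq5_le, -, hq2_le, rfl⟩
  have hq2_le_c : P00 - P01 * (P10 + P00) / (P01 + P11) ≤ 1 - P10 - P11 := by
    linarith [mtsBound_q2_le h01.le hb.le (by linarith : 0 ≤ P10 + P00)]
  exact add_div_add_le_add_div_add (by linarith) hq2_le hq5_le hq2_le_c
end

section
/- Under MTR and MTS, the sharp upper bound on the reverse persuasion rate equals the ratio estimand: for positive reals P00, P10, P01, P11 summing to 1, the maximum of (q2+q5)/(q2+P10+P11) over q2, q5 satisfying 0 ≤ q5 ≤ P11 - P10(P01+P11)/(P00+P10) and 0 ≤ q2 ≤ P00 - P01(P10+P00)/(P01+P11) (assuming these upper limits are nonnegative) equals (P11/(P01+P11) - P10/(P00+P10)) / (P11/(P01+P11)). -/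
/-- Under MTR and MTS, the sharp upper bound on the reverse persuasion rate
equals `(P11/(P01+P11) - P10/(P00+P10)) / (P11/(P01+P11))`. -/
theorem stmt1 (P00 P10 P01 P11 : ℝ)
    (h00 : 0 < P00) (h10 : 0 < P10) (h01 : 0 < P01) (h11 : 0 < P11)
    (hsum : P00 + P10 + P01 + P11 = 1)
    (hub5 : 0 ≤ P11 - P10 * (P01 + P11) / (P00 + P10))
    (hub2 : 0 ≤ P00 - P01 * (P10 + P00) / (P01 + P11)) :
    IsGreatest
      {x : ℝ | ∃ q2 q5 : ℝ,
        0 ≤ q5 ∧ q5 ≤ P11 - P10 * (P01 + P11) / (P00 + P10) ∧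
        0 ≤ q2 ∧ q2 ≤ P00 - P01 * (P10 + P00) / (P01 + P11) ∧
        x = (q2 + q5) / (q2 + P10 + P11)}
      ((P11 / (P01 + P11) - P10 / (P00 + P10)) / (P11 / (P01 + P11))) := by
  have hA : 0 < P00 + P10 := by linarith
  have hB : 0 < P01 + P11 := by linarith
  have hP00 : P00 = 1 - P10 - P01 - P11 := by linarith
  subst hP00
  have hA' : (0:ℝ) < 1 - P01 - P11 := by linarith
  have hAe : (1 - P10 - P01 - P11) + P10 = 1 - P01 - P11 := by ring
  constructor
  · refine ⟨(1 - P10 - P01 - P11) - P01 * (P10 + (1 - P10 - P01 - P11)) / (P01 + P11),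
      P11 - P10 * (P01 + P11) / ((1 - P10 - P01 - P11) + P10), hub5, le_refl _, hub2,
      le_refl _, ?_⟩
    rw [hAe]
    have hden : (1 - P10 - P01 - P11) - P01 * (P10 + (1 - P10 - P01 - P11)) / (P01 + P11)
        + P10 + P11 = P11 / (P01 + P11) := by
      field_simp; ring
    rw [hden]
    congr 1
    field_simp
    ring
  · rintro x ⟨q2, q5, hq5, hq5u, hq2, hq2u, rfl⟩
    rw [hAe] at hq5u ⊢
    have hd : 0 < q2 + P10 + P11 := by linarith
    have hVeq : (P11 / (P01 + P11) - P10 / (1 - P01 - P11)) / (P11 / (P01 + P11))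
        = (P11 * (1 - P01 - P11) - P10 * (P01 + P11)) / (P11 * (1 - P01 - P11)) := by
      field_simp
    rw [hVeq, div_le_div_iff₀ hd (by positivity)]
    have h5 : q5 * (1 - P01 - P11) ≤ P11 * (1 - P01 - P11) - P10 * (P01 + P11) := by
      have := mul_le_mul_of_nonneg_right hq5u hA'.le
      have he : (P11 - P10 * (P01 + P11) / (1 - P01 - P11)) * (1 - P01 - P11)
          = P11 * (1 - P01 - P11) - P10 * (P01 + P11) := by field_simp
      linarith [he ▸ this]
    have h2 : q2 * (P01 + P11) ≤ (1 - P10 - P01 - P11) * (P01 + P11)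
        - P01 * (P10 + (1 - P10 - P01 - P11)) := by
      have := mul_le_mul_of_nonneg_right hq2u hB.le
      have he : ((1 - P10 - P01 - P11) - P01 * (P10 + (1 - P10 - P01 - P11)) / (P01 + P11))
          * (P01 + P11) = (1 - P10 - P01 - P11) * (P01 + P11)
          - P01 * (P10 + (1 - P10 - P01 - P11)) := by field_simp
      linarith [he ▸ this]
    nlinarith [mul_le_mul_of_nonneg_left h5 h11.le, mul_le_mul_of_nonneg_left h2 h10.le,
      mul_nonneg hq2 h10.le, mul_nonneg hq5 hB.le]
end

section
/- Under MTR and MTS, the sharp identified interval for Pr{NP} is [P01/(P01+P11), P00+P01]: the maximum of P00+P01−q2 over feasible q2 ∈ [0, P00 − P01(P10+P00)/(P01+P11)] is P00+P01, and the minimum is P01·(P00+P10)/(P01+P11) + P01 = P01·(P00+P10+P01+P11)/(P01+P11) = P01/(P01+P11). -/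
/-- Under MTR and MTS, the sharp identified interval for `Pr{NP} = P00+P01-q2`
with `q2 ∈ [0, P00 - P01(P10+P00)/(P01+P11)]`: the maximum is `P00+P01` and
the minimum is `P01/(P01+P11)`. -/
theorem stmt3 (P00 P10 P01 P11 : ℝ)
    (h00 : 0 < P00) (h10 : 0 < P10) (h01 : 0 < P01) (h11 : 0 < P11)
    (hsum : P00 + P10 + P01 + P11 = 1)
    (hub2 : 0 ≤ P00 - P01 * (P10 + P00) / (P01 + P11)) :
    IsGreatest
      {x : ℝ | ∃ q2 : ℝ, 0 ≤ q2 ∧ q2 ≤ P00 - P01 * (P10 + P00) / (P01 + P11) ∧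
        x = P00 + P01 - q2} (P00 + P01) ∧
    IsLeast
      {x : ℝ | ∃ q2 : ℝ, 0 ≤ q2 ∧ q2 ≤ P00 - P01 * (P10 + P00) / (P01 + P11) ∧
        x = P00 + P01 - q2} (P01 / (P01 + P11)) := by
  have hpos : 0 < P01 + P11 := by linarith
  have hmin : P01 / (P01 + P11) = P00 + P01 - (P00 - P01 * (P10 + P00) / (P01 + P11)) := by
    field_simp
    nlinarith [hpos]
  constructor
  · constructor
    · exact ⟨0, le_refl 0, hub2, by ring⟩
    · rintro x ⟨q2, hq0, hq2, rfl⟩; linarith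
  · constructor
    · exact ⟨P00 - P01 * (P10 + P00) / (P01 + P11), hub2, le_refl _, hmin⟩
    · rintro x ⟨q2, hq0, hq2, rfl⟩; rw [hmin]; linarith
end

section
/- Under MTR and MTS, the sharp identified interval for Pr{AP} is [P10/(P00+P10), P10+P11]: the quantity P10+P11−q5, with q5 ranging over [0, P11 − P10(P01+P11)/(P00+P10)], attains minimum value P10/(P00+P10) (i.e., Pr(Y=1|D=0)) and maximum value P10+P11 (i.e., Pr(Y=1)). -/
/-- Under MTR and MTS, the sharp identified interval for `Pr{AP} = P10+P11-q5`
with `q5 ∈ [0, P11 - P10(P01+P11)/(P00+P10)]`: minimum `P10/(P00+P10)` and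
maximum `P10+P11`. -/
theorem stmt4 (P00 P10 P01 P11 : ℝ)
    (h00 : 0 < P00) (h10 : 0 < P10) (h01 : 0 < P01) (h11 : 0 < P11)
    (hsum : P00 + P10 + P01 + P11 = 1)
    (hub5 : 0 ≤ P11 - P10 * (P01 + P11) / (P00 + P10)) :
    IsLeast
      {x : ℝ | ∃ q5 : ℝ, 0 ≤ q5 ∧ q5 ≤ P11 - P10 * (P01 + P11) / (P00 + P10) ∧
        x = P10 + P11 - q5} (P10 / (P00 + P10)) ∧
    IsGreatest
      {x : ℝ | ∃ q5 : ℝ, 0 ≤ q5 ∧ q5 ≤ P11 - P10 * (P01 + P11) / (P00 + P10) ∧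
        x = P10 + P11 - q5} (P10 + P11) := by
  have hpos : 0 < P00 + P10 := by linarith
  have key : P10 + P11 - (P11 - P10 * (P01 + P11) / (P00 + P10)) = P10 / (P00 + P10) := by
    field_simp
    nlinarith [hsum]
  constructor
  · constructor
    · exact ⟨_, hub5, le_refl _, key.symm⟩
    · rintro x ⟨q5, hq0, hq1, rfl⟩
      rw [← key]; linarith
  · constructor
    · exact ⟨0, le_refl _, hub5, by ring⟩
    · rintro x ⟨q5, hq0, hq1, rfl⟩; linarith
end

section
/- Under MTR and MTS, the sharp upper bound on the average treatment effect Pr{TP} = q2+q5 equals P11/(P01+P11) − P10/(P00+P10): the maximum of q2+q5 subject to 0 ≤ q5 ≤ P11 − P10(P01+P11)/(P00+P10) and 0 ≤ q2 ≤ P00 − P01(P10+P00)/(P01+P11) equals Pr(Y=1|D=1) − Pr(Y=1|D=0) = P11/(P01+P11) − P10/(P00+P10), and the minimum is 0. -/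
/-- Under MTR and MTS, the sharp upper bound on `Pr{TP} = q2+q5` equals
`P11/(P01+P11) - P10/(P00+P10)`, and the sharp lower bound is `0`. -/
theorem stmt5 (P00 P10 P01 P11 : ℝ)
    (h00 : 0 < P00) (h10 : 0 < P10) (h01 : 0 < P01) (h11 : 0 < P11)
    (hsum : P00 + P10 + P01 + P11 = 1)
    (hub5 : 0 ≤ P11 - P10 * (P01 + P11) / (P00 + P10))
    (hub2 : 0 ≤ P00 - P01 * (P10 + P00) / (P01 + P11)) :
    IsGreatest
      {x : ℝ | ∃ q2 q5 : ℝ,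
        0 ≤ q5 ∧ q5 ≤ P11 - P10 * (P01 + P11) / (P00 + P10) ∧
        0 ≤ q2 ∧ q2 ≤ P00 - P01 * (P10 + P00) / (P01 + P11) ∧
        x = q2 + q5} (P11 / (P01 + P11) - P10 / (P00 + P10)) ∧
    IsLeast
      {x : ℝ | ∃ q2 q5 : ℝ,
        0 ≤ q5 ∧ q5 ≤ P11 - P10 * (P01 + P11) / (P00 + P10) ∧
        0 ≤ q2 ∧ q2 ≤ P00 - P01 * (P10 + P00) / (P01 + P11) ∧
        x = q2 + q5} 0 := by
  have ha : P00 + P10 ≠ 0 := by positivity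
  have hb : P01 + P11 ≠ 0 := by positivity
  have key : (P00 - P01 * (P10 + P00) / (P01 + P11)) +
      (P11 - P10 * (P01 + P11) / (P00 + P10)) =
      P11 / (P01 + P11) - P10 / (P00 + P10) := by
    field_simp
    linear_combination (P11 * (P00 + P10) - P10 * (P01 + P11)) * hsum
  constructor
  · constructor
    · exact ⟨_, _, hub5, le_refl _, hub2, le_refl _, key.symm⟩
    · rintro x ⟨q2, q5, h1, h2, h3, h4, rfl⟩
      linarith
  · constructor
    · exact ⟨0, 0, le_refl _, hub5, le_refl _, hub2, by ring⟩
    · rintro x ⟨q2, q5, h1, h2, h3, h4, rfl⟩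
      linarith
end

section
/- Under MTS alone, the sharp upper bound on the persuasion rate θ equals min{(P11/Q1)/(P11+P00), 1}: the maximum of (q2 − q8 + P11)/(P00+P01+P11−q7−q8) over q2,q4,q7,q8 satisfying 0 ≤ q2 ≤ P00, 0 ≤ q4 ≤ P10, 0 ≤ q7 ≤ P01, 0 ≤ q8 ≤ P11, q2+q4 ≤ P11·Q0/Q1, and P10·Q1/Q0 ≤ q7+q8 ≤ Q1 equals min{(P11/Q1)/(P11+P00), 1}, where Q0 = P00+P10 and Q1 = P01+P11. -/
/-- Under MTS alone, the sharp upper bound on the persuasion rate equals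
`min ((P11/Q1)/(P11+P00)) 1` with `Q0 = P00+P10`, `Q1 = P01+P11`. -/
theorem stmt8 (P00 P10 P01 P11 : ℝ)
    (h00 : 0 < P00) (h10 : 0 < P10) (h01 : 0 < P01) (h11 : 0 < P11)
    (hsum : P00 + P10 + P01 + P11 = 1) :
    IsGreatest
      {x : ℝ | ∃ q2 q4 q7 q8 : ℝ,
        0 ≤ q2 ∧ q2 ≤ P00 ∧ 0 ≤ q4 ∧ q4 ≤ P10 ∧
        0 ≤ q7 ∧ q7 ≤ P01 ∧ 0 ≤ q8 ∧ q8 ≤ P11 ∧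
        q2 + q4 ≤ P11 * (P00 + P10) / (P01 + P11) ∧
        P10 * (P01 + P11) / (P00 + P10) ≤ q7 + q8 ∧ q7 + q8 ≤ P01 + P11 ∧
        x = (q2 - q8 + P11) / (P00 + P01 + P11 - q7 - q8)}
      (min ((P11 / (P01 + P11)) / (P11 + P00)) 1) := by
  have hQ0 : 0 < P00 + P10 := by linarith
  have hQ1 : 0 < P01 + P11 := by linarith
  have hS : 0 < P11 + P00 := by linarith
  constructor
  · -- membership
    rcases le_or_gt (P11 / (P01 + P11) / (P11 + P00)) 1 with hA | hA
    · -- min = A; witness q2 = P11*Q0/Q1, q4=0, q7=P01, q8=0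
      have hkey : P11 * (P00 + P10) ≤ P00 * (P01 + P11) := by
        rw [div_le_one hS, div_le_iff₀ hQ1] at hA
        nlinarith
      refine ⟨P11 * (P00 + P10) / (P01 + P11), 0, P01, 0, by positivity, ?_,
        le_refl 0, h10.le, h01.le, le_refl P01, le_refl 0, h11.le, ?_, ?_, by linarith, ?_⟩
      · rw [div_le_iff₀ hQ1]; nlinarith
      · rw [add_zero]
      · rw [div_le_iff₀ hQ0]; nlinarith
      · have e1 : P11 * (P00 + P10) / (P01 + P11) - 0 + P11 = P11 / (P01 + P11) := by
          field_simp
          linear_combination P11 * hsum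
        rw [min_eq_left hA, e1]
        congr 1
        ring
    · -- min = 1; witness q2=P00, q4=0, q7=P01, q8 = P10*Q1/Q0 - P01
      have hkey : P00 * (P01 + P11) < P11 * (P00 + P10) := by
        rw [lt_div_iff₀ hS, one_mul, lt_div_iff₀ hQ1] at hA
        nlinarith
      have hq8nn : 0 ≤ P10 * (P01 + P11) / (P00 + P10) - P01 := by
        rw [sub_nonneg, le_div_iff₀ hQ0]; nlinarith
      have hq8lt : P10 * (P01 + P11) / (P00 + P10) - P01 < P11 := by
        rw [sub_lt_iff_lt_add, div_lt_iff₀ hQ0]; nlinarith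
      refine ⟨P00, 0, P01, P10 * (P01 + P11) / (P00 + P10) - P01,
        h00.le, le_refl P00, le_refl 0, h10.le, h01.le, le_refl P01, hq8nn, hq8lt.le,
        ?_, by linarith, by linarith, ?_⟩
      · rw [add_zero, le_div_iff₀ hQ1]; nlinarith
      · rw [min_eq_right hA.le]
        rw [eq_comm, div_eq_one_iff_eq (by linarith)]
        ring
  · -- upper bound
    rintro x ⟨q2, q4, q7, q8, h1, h2, h3, h4, h5, h6, h7, h8, h9, h10', h11', hx⟩
    have hD : 0 < P00 + P01 + P11 - q7 - q8 := by linarith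
    rw [le_min_iff]
    constructor
    · -- x ≤ A
      rcases le_or_gt P11 ((P01 + P11) * (P11 + P00)) with hc | hc
      · rw [hx, div_div, div_le_div_iff₀ hD (by positivity)]
        have hq2 : q2 * (P01 + P11) ≤ P11 * (P00 + P10) := by
          nlinarith [(le_div_iff₀ hQ1).mp h9, mul_nonneg h3 hQ1.le]
        have hQsum : P11 * (P00 + P10) * (P11 + P00) + P11 * ((P01 + P11) * (P11 + P00))
            = P11 * (P11 + P00) := by linear_combination P11 * (P11 + P00) * hsum
        nlinarith [mul_nonneg h7 (sub_nonneg.mpr hc), mul_nonneg h11.le (sub_nonneg.mpr h6),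
          mul_le_mul_of_nonneg_right hq2 hS.le, hQsum]
      · -- A > 1, use x ≤ 1 ≤ A
        have h1le : x ≤ 1 := by
          rw [hx, div_le_one hD]; linarith only [h2, h6]
        have h2le : (1 : ℝ) ≤ P11 / (P01 + P11) / (P11 + P00) := by
          rw [div_div, le_div_iff₀ (by positivity), one_mul]; linarith only [hc]
        linarith only [h1le, h2le]
    · rw [hx, div_le_one hD]; linarith only [h2, h6]
end

section
/- Under MTS alone, the sharp upper bound on the reverse persuasion rate θ^(r) equals min{(1 − P10/Q0)/(P11+P00), 1}: the maximum of (q2 − q8 + P11)/(q2 + q4 + P11) over q2,q4,q7,q8 satisfying 0 ≤ q2 ≤ P00, 0 ≤ q4 ≤ P10, 0 ≤ q7 ≤ P01, 0 ≤ q8 ≤ P11, q2+q4 ≤ P11·Q0/Q1, and P10·Q1/Q0 ≤ q7+q8 ≤ Q1 equals min{(P00/Q0)/(P11+P00), 1}, where Q0 = P00+P10, Q1 = P01+P11, noting 1 − P10/Q0 = P00/Q0. -/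
/-!
Write `Q0 = P00 + P10`, `Q1 = P01 + P11` and `L = P10 Q1 / Q0 - P01`. The constraints
`q7 ≤ P01` and `P10 Q1 / Q0 ≤ q7 + q8` force `q8 ≥ L`. The ratio only grows when `q4` is
dropped, and `t ↦ (t + P11 - q8) / (t + P11)` is nondecreasing, so every rate is at most
`(P00 + P11 - L) / (P11 + P00)`, which equals `(P00 / Q0) / (P11 + P00)` because
`Q0 + Q1 = 1`; trivially it is also at most `1`. This bound is at most `1` exactly when
`L ≥ 0`, and then `(q2, q4, q7, q8) = (P00, 0, P01, L)` attains it; otherwise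
`(0, 0, P10 Q1 / Q0, 0)` attains `1`.
-/

theorem add_div_add_le_add_div_add_s9 {K : Type*} [Field K] [LinearOrder K] [IsStrictOrderedRing K]
    {c d s t : K} (hcd : c ≤ d) (hs : 0 < s + d) (hst : s ≤ t) :
    (s + c) / (s + d) ≤ (t + c) / (t + d) := by
  rw [div_le_div_iff₀ hs (by linarith)]
  nlinarith [mul_nonneg (sub_nonneg.2 hst) (sub_nonneg.2 hcd)]

def mtsReverseRates (P00 P10 P01 P11 : ℝ) : Set ℝ :=
  {x : ℝ | ∃ q2 q4 q7 q8 : ℝ,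
    0 ≤ q2 ∧ q2 ≤ P00 ∧ 0 ≤ q4 ∧ q4 ≤ P10 ∧
    0 ≤ q7 ∧ q7 ≤ P01 ∧ 0 ≤ q8 ∧ q8 ≤ P11 ∧
    q2 + q4 ≤ P11 * (P00 + P10) / (P01 + P11) ∧
    P10 * (P01 + P11) / (P00 + P10) ≤ q7 + q8 ∧ q7 + q8 ≤ P01 + P11 ∧
    x = (q2 - q8 + P11) / (q2 + q4 + P11)}

noncomputable def q8LowerBound (P00 P10 P01 P11 : ℝ) : ℝ :=
  P10 * (P01 + P11) / (P00 + P10) - P01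

namespace MTSReverseRate

variable {P00 P10 P01 P11 : ℝ}

theorem add_sub_q8LowerBound (hQ0 : P00 + P10 ≠ 0) (hsum : P00 + P10 + P01 + P11 = 1) :
    P00 + P11 - q8LowerBound P00 P10 P01 P11 = P00 / (P00 + P10) := by
  rw [q8LowerBound, eq_div_iff hQ0]
  field_simp
  linear_combination P00 * hsum

theorem bound_eq (hQ0 : P00 + P10 ≠ 0) (hsum : P00 + P10 + P01 + P11 = 1) :
    P00 / (P00 + P10) / (P11 + P00) =
      (P11 + P00 - q8LowerBound P00 P10 P01 P11) / (P11 + P00) := by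
  rw [← add_sub_q8LowerBound hQ0 hsum, add_comm P00]

theorem bound_le_one_iff (hQ0 : P00 + P10 ≠ 0) (hS : 0 < P11 + P00)
    (hsum : P00 + P10 + P01 + P11 = 1) :
    P00 / (P00 + P10) / (P11 + P00) ≤ 1 ↔ 0 ≤ q8LowerBound P00 P10 P01 P11 := by
  rw [bound_eq hQ0 hsum, div_le_one hS]
  constructor <;> intro h <;> linarith

theorem one_le_bound_iff (hQ0 : P00 + P10 ≠ 0) (hS : 0 < P11 + P00)
    (hsum : P00 + P10 + P01 + P11 = 1) :
    1 ≤ P00 / (P00 + P10) / (P11 + P00) ↔ q8LowerBound P00 P10 P01 P11 ≤ 0 := by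
  rw [bound_eq hQ0 hsum, one_le_div hS]
  constructor <;> intro h <;> linarith

theorem rate_le_div {q2 q4 q8 : ℝ} (hq2 : 0 ≤ q2) (hq2P : q2 ≤ P00) (hq4 : 0 ≤ q4)
    (hq8 : 0 ≤ q8) (hq8P : q8 ≤ P11) (h11 : 0 < P11) :
    (q2 - q8 + P11) / (q2 + q4 + P11) ≤ (P11 + P00 - q8) / (P11 + P00) :=
  calc (q2 - q8 + P11) / (q2 + q4 + P11)
      ≤ (q2 + (P11 - q8)) / (q2 + P11) := by
        rw [sub_add_eq_add_sub, add_sub_assoc]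
        exact div_le_div_of_nonneg_left (by linarith) (by linarith) (by linarith)
    _ ≤ (P00 + (P11 - q8)) / (P00 + P11) :=
        add_div_add_le_add_div_add_s9 (by linarith) (by linarith) hq2P
    _ = (P11 + P00 - q8) / (P11 + P00) := by ring_nf

theorem le_min_of_mem (h00 : 0 < P00) (h10 : 0 < P10) (h11 : 0 < P11)
    (hsum : P00 + P10 + P01 + P11 = 1) {x : ℝ} (hx : x ∈ mtsReverseRates P00 P10 P01 P11) :
    x ≤ min (P00 / (P00 + P10) / (P11 + P00)) 1 := by
  obtain ⟨q2, q4, q7, q8, hq2, hq2P, hq4, -, -, hq7P, hq8, hq8P, -, hlo, -, rfl⟩ := hx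
  have hq8L : q8LowerBound P00 P10 P01 P11 ≤ q8 := by
    rw [q8LowerBound]; linarith
  refine le_min ?_ ((div_le_one (by linarith)).2 (by linarith))
  calc (q2 - q8 + P11) / (q2 + q4 + P11)
      ≤ (P11 + P00 - q8) / (P11 + P00) := rate_le_div hq2 hq2P hq4 hq8 hq8P h11
    _ ≤ (P11 + P00 - q8LowerBound P00 P10 P01 P11) / (P11 + P00) := by
        gcongr
    _ = P00 / (P00 + P10) / (P11 + P00) := (bound_eq (by positivity) hsum).symm

theorem bound_mem (h00 : 0 < P00) (h10 : 0 < P10) (h01 : 0 < P01) (h11 : 0 < P11)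
    (hsum : P00 + P10 + P01 + P11 = 1) (hle : P00 / (P00 + P10) / (P11 + P00) ≤ 1) :
    P00 / (P00 + P10) / (P11 + P00) ∈ mtsReverseRates P00 P10 P01 P11 := by
  have hQ0 : 0 < P00 + P10 := by linarith
  have hQ1 : 0 < P01 + P11 := by linarith
  have hL := (bound_le_one_iff hQ0.ne' (by linarith) hsum).1 hle
  have hLP : q8LowerBound P00 P10 P01 P11 ≤ P11 := by
    rw [q8LowerBound, sub_le_iff_le_add, div_le_iff₀ hQ0]; nlinarith
  refine ⟨P00, 0, P01, q8LowerBound P00 P10 P01 P11, h00.le, le_rfl, le_rfl, h10.le, h01.le,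
    le_rfl, hL, hLP, ?_, by rw [q8LowerBound]; linarith, by linarith, ?_⟩
  · rw [q8LowerBound, sub_nonneg, le_div_iff₀ hQ0] at hL
    rw [add_zero, le_div_iff₀ hQ1]
    linear_combination hL
  · rw [bound_eq hQ0.ne' hsum]; ring_nf

theorem one_mem (h00 : 0 < P00) (h10 : 0 < P10) (h01 : 0 < P01) (h11 : 0 < P11)
    (hsum : P00 + P10 + P01 + P11 = 1) (hle : 1 ≤ P00 / (P00 + P10) / (P11 + P00)) :
    1 ∈ mtsReverseRates P00 P10 P01 P11 := by
  have hQ0 : 0 < P00 + P10 := by linarith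
  have hL := (one_le_bound_iff hQ0.ne' (by linarith) hsum).1 hle
  rw [q8LowerBound, sub_nonpos] at hL
  refine ⟨0, 0, P10 * (P01 + P11) / (P00 + P10), 0, le_rfl, h00.le, le_rfl, h10.le,
    by positivity, hL, le_rfl, h11.le, by rw [add_zero]; positivity, by rw [add_zero], ?_, ?_⟩
  · rw [add_zero, div_le_iff₀ hQ0]; nlinarith
  · simp [h11.ne']

end MTSReverseRate

open MTSReverseRate in
/-- Under MTS alone, the sharp upper bound on the reverse persuasion rate
equals `min ((P00/Q0)/(P11+P00)) 1` with `Q0 = P00+P10`, `Q1 = P01+P11`. -/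
theorem stmt9 (P00 P10 P01 P11 : ℝ)
    (h00 : 0 < P00) (h10 : 0 < P10) (h01 : 0 < P01) (h11 : 0 < P11)
    (hsum : P00 + P10 + P01 + P11 = 1) :
    IsGreatest
      {x : ℝ | ∃ q2 q4 q7 q8 : ℝ,
        0 ≤ q2 ∧ q2 ≤ P00 ∧ 0 ≤ q4 ∧ q4 ≤ P10 ∧
        0 ≤ q7 ∧ q7 ≤ P01 ∧ 0 ≤ q8 ∧ q8 ≤ P11 ∧
        q2 + q4 ≤ P11 * (P00 + P10) / (P01 + P11) ∧
        P10 * (P01 + P11) / (P00 + P10) ≤ q7 + q8 ∧ q7 + q8 ≤ P01 + P11 ∧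
        x = (q2 - q8 + P11) / (q2 + q4 + P11)}
      (min ((P00 / (P00 + P10)) / (P11 + P00)) 1) := by
  refine ⟨?_, fun x hx => le_min_of_mem h00 h10 h11 hsum hx⟩
  rcases le_total (P00 / (P00 + P10) / (P11 + P00)) 1 with hle | hge
  · rw [min_eq_left hle]
    exact bound_mem h00 h10 h01 h11 hsum hle
  · rw [min_eq_right hge]
    exact one_mem h00 h10 h01 h11 hsum hge
end

section
/- Under MTS alone, the sharp upper bound on PS = Pr{Y(1)=1 | Y=0, D=0} equals min{P11·Q0/(P00·Q1), 1}: the maximum of q2/P00 over q2, q4 satisfying 0 ≤ q2 ≤ P00, 0 ≤ q4 ≤ P10, q2+q4 ≤ P11·Q0/Q1 equals min{P11·Q0/Q1, P00}/P00 = min{P11·Q0/(P00·Q1), 1}, attained at q2 = min{P00, P11·Q0/Q1}, q4 = 0; and the minimum is 0. -/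
/-- Under MTS alone, the sharp upper bound on `PS = q2/P00` equals
`min (P11*Q0/(P00*Q1)) 1`, and the sharp lower bound is `0`. -/
theorem stmt10 (P00 P10 P01 P11 : ℝ)
    (h00 : 0 < P00) (h10 : 0 < P10) (h01 : 0 < P01) (h11 : 0 < P11)
    (hsum : P00 + P10 + P01 + P11 = 1) :
    IsGreatest
      {x : ℝ | ∃ q2 q4 : ℝ,
        0 ≤ q2 ∧ q2 ≤ P00 ∧ 0 ≤ q4 ∧ q4 ≤ P10 ∧
        q2 + q4 ≤ P11 * (P00 + P10) / (P01 + P11) ∧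
        x = q2 / P00}
      (min (P11 * (P00 + P10) / (P00 * (P01 + P11))) 1) ∧
    IsLeast
      {x : ℝ | ∃ q2 q4 : ℝ,
        0 ≤ q2 ∧ q2 ≤ P00 ∧ 0 ≤ q4 ∧ q4 ≤ P10 ∧
        q2 + q4 ≤ P11 * (P00 + P10) / (P01 + P11) ∧
        x = q2 / P00} 0 := by
  have hQ1 : 0 < P01 + P11 := by linarith
  set B : ℝ := P11 * (P00 + P10) / (P01 + P11) with hB
  have hBpos : 0 < B := by positivity
  have hkey : P11 * (P00 + P10) / (P00 * (P01 + P11)) = B / P00 := by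
    rw [hB]; field_simp
  have hmin : min (P11 * (P00 + P10) / (P00 * (P01 + P11))) 1 = min B P00 / P00 := by
    rw [hkey, ← min_div_div_right h00.le, div_self h00.ne']
  constructor
  · constructor
    · refine ⟨min B P00, 0, le_min hBpos.le h00.le, min_le_right _ _, le_refl _,
        h10.le, by simpa using min_le_left B P00, hmin⟩
    · rintro x ⟨q2, q4, hq2, hq2le, hq4, _, hsum2, rfl⟩
      rw [hmin]
      gcongr
      exact le_min (by linarith) hq2le
  · constructor
    · exact ⟨0, 0, le_refl _, h00.le, le_refl _, h10.le, by simp [hBpos.le], by simp⟩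
    · rintro x ⟨q2, q4, hq2, _, _, _, _, rfl⟩
      positivity
end

section
/- Under MTS alone, the sharp upper bound on PN = Pr{Y(0)=0 | Y=1, D=1} equals min{P00·Q1/(P11·Q0), 1}: the maximum of (P11 − q8)/P11 over q7, q8 satisfying 0 ≤ q7 ≤ P01, 0 ≤ q8 ≤ P11, P10·Q1/Q0 ≤ q7+q8 ≤ Q1 equals (P11 − max{0, P10·Q1/Q0 − P01})/P11 = min{P00·Q1/(P11·Q0), 1}, attained at q7 = P01, q8 = max{0, P10·Q1/Q0 − P01}; and the minimum is 0. -/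
/-!
Only `q8` enters `PN`, and eliminating `q7 ∈ [0, P01]` leaves `q8` free on the interval
`[max 0 (L - P01), P11]`, where `L = P10·Q1/Q0` is the MTS lower bound on `q7 + q8`.
So `PN` ranges from `0` (at `q8 = P11`) up to `(P11 - max 0 (L - P01)) / P11
= min ((Q1 - L) / P11) 1`, and `Q1 - L = P00·Q1/Q0`.
-/

def pnRange (p01 p11 l : ℝ) : Set ℝ :=
  {x | ∃ q7 q8 : ℝ, 0 ≤ q7 ∧ q7 ≤ p01 ∧ 0 ≤ q8 ∧ q8 ≤ p11 ∧
    l ≤ q7 + q8 ∧ q7 + q8 ≤ p01 + p11 ∧ x = (p11 - q8) / p11}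

section pnRange

variable {p01 p11 l : ℝ}

lemma sub_max_zero_div_eq_min (h11 : 0 < p11) :
    (p11 - max 0 (l - p01)) / p11 = min ((p01 + p11 - l) / p11) 1 := by
  rcases le_total l p01 with h | h
  · have h1 : 1 ≤ (p01 + p11 - l) / p11 := by rw [le_div_iff₀ h11]; linarith
    rw [max_eq_left (by linarith), min_eq_right h1, sub_zero, div_self h11.ne']
  · have h1 : (p01 + p11 - l) / p11 ≤ 1 := by rw [div_le_one h11]; linarith
    rw [max_eq_right (by linarith), min_eq_left h1]
    ring

lemma isGreatest_pnRange (h01 : 0 ≤ p01) (h11 : 0 < p11) (hl : l ≤ p01 + p11) :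
    IsGreatest (pnRange p01 p11 l) (min ((p01 + p11 - l) / p11) 1) := by
  refine ⟨⟨p01, max 0 (l - p01), h01, le_rfl, le_max_left _ _, ?_, ?_, ?_,
    (sub_max_zero_div_eq_min h11).symm⟩, ?_⟩
  · exact max_le h11.le (by linarith)
  · linarith [le_max_right 0 (l - p01)]
  · linarith [max_le h11.le (show l - p01 ≤ p11 by linarith)]
  · rintro x ⟨q7, q8, -, hq7, hq8, -, hlo, -, rfl⟩
    refine le_min ?_ ?_
    · exact div_le_div_of_nonneg_right (by linarith) h11.le
    · rw [div_le_one h11]; linarith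

lemma isLeast_pnRange (h01 : 0 ≤ p01) (h11 : 0 < p11) (hl : l ≤ p01 + p11) :
    IsLeast (pnRange p01 p11 l) 0 := by
  refine ⟨⟨p01, p11, h01, le_rfl, h11.le, le_rfl, hl, le_rfl, by simp⟩, ?_⟩
  rintro x ⟨q7, q8, -, -, -, hq8, -, -, rfl⟩
  exact div_nonneg (by linarith) h11.le

end pnRange

lemma mul_div_add_le_self {p00 p10 q : ℝ} (h00 : 0 ≤ p00) (h10 : 0 < p10) (hq : 0 ≤ q) :
    p10 * q / (p00 + p10) ≤ q := by
  rw [div_le_iff₀ (by linarith)]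
  nlinarith

theorem stmt11_general (P00 P10 P01 P11 : ℝ)
    (h00 : 0 < P00) (h10 : 0 < P10) (h01 : 0 < P01) (h11 : 0 < P11) :
    IsGreatest
      {x : ℝ | ∃ q7 q8 : ℝ,
        0 ≤ q7 ∧ q7 ≤ P01 ∧ 0 ≤ q8 ∧ q8 ≤ P11 ∧
        P10 * (P01 + P11) / (P00 + P10) ≤ q7 + q8 ∧ q7 + q8 ≤ P01 + P11 ∧
        x = (P11 - q8) / P11}
      (min (P00 * (P01 + P11) / (P11 * (P00 + P10))) 1) ∧
    IsLeast
      {x : ℝ | ∃ q7 q8 : ℝ,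
        0 ≤ q7 ∧ q7 ≤ P01 ∧ 0 ≤ q8 ∧ q8 ≤ P11 ∧
        P10 * (P01 + P11) / (P00 + P10) ≤ q7 + q8 ∧ q7 + q8 ≤ P01 + P11 ∧
        x = (P11 - q8) / P11} 0 := by
  have hL : P10 * (P01 + P11) / (P00 + P10) ≤ P01 + P11 :=
    mul_div_add_le_self h00.le h10 (by linarith)
  have hbound : (P01 + P11 - P10 * (P01 + P11) / (P00 + P10)) / P11
      = P00 * (P01 + P11) / (P11 * (P00 + P10)) := by
    field_simp
    ring
  rw [← hbound]
  exact ⟨isGreatest_pnRange h01.le h11 hL, isLeast_pnRange h01.le h11 hL⟩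

/-- Under MTS alone, the sharp upper bound on `PN = (P11-q8)/P11` equals
`min (P00*Q1/(P11*Q0)) 1`, and the sharp lower bound is `0`. -/
theorem stmt11 (P00 P10 P01 P11 : ℝ)
    (h00 : 0 < P00) (h10 : 0 < P10) (h01 : 0 < P01) (h11 : 0 < P11)
    (hsum : P00 + P10 + P01 + P11 = 1) :
    IsGreatest
      {x : ℝ | ∃ q7 q8 : ℝ,
        0 ≤ q7 ∧ q7 ≤ P01 ∧ 0 ≤ q8 ∧ q8 ≤ P11 ∧
        P10 * (P01 + P11) / (P00 + P10) ≤ q7 + q8 ∧ q7 + q8 ≤ P01 + P11 ∧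
        x = (P11 - q8) / P11}
      (min (P00 * (P01 + P11) / (P11 * (P00 + P10))) 1) ∧
    IsLeast
      {x : ℝ | ∃ q7 q8 : ℝ,
        0 ≤ q7 ∧ q7 ≤ P01 ∧ 0 ≤ q8 ∧ q8 ≤ P11 ∧
        P10 * (P01 + P11) / (P00 + P10) ≤ q7 + q8 ∧ q7 + q8 ≤ P01 + P11 ∧
        x = (P11 - q8) / P11} 0 :=
  stmt11_general P00 P10 P01 P11 h00 h10 h01 h11
end

section
/- Under MTS alone, the sharp upper bound on PNS = Pr{Y(1)=1, Y(0)=0} equals min{P00/Q0, P11/Q1}: the maximum of q2 − q8 + P11 over q2,q4,q7,q8 satisfying 0 ≤ q2 ≤ P00, 0 ≤ q4 ≤ P10, 0 ≤ q7 ≤ P01, 0 ≤ q8 ≤ P11, q2+q4 ≤ P11·Q0/Q1, P10·Q1/Q0 ≤ q7+q8 ≤ Q1 equals min{1 − P10/Q0, P11/Q1} = min{Pr(Y=0|D=0), Pr(Y=1|D=1)}. -/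
/-- Under MTS alone, the sharp upper bound on `PNS = q2 - q8 + P11` equals
`min (P00/Q0) (P11/Q1)` where `Q0 = P00+P10`, `Q1 = P01+P11`. -/
theorem stmt12 (P00 P10 P01 P11 : ℝ)
    (h00 : 0 < P00) (h10 : 0 < P10) (h01 : 0 < P01) (h11 : 0 < P11)
    (hsum : P00 + P10 + P01 + P11 = 1) :
    IsGreatest
      {x : ℝ | ∃ q2 q4 q7 q8 : ℝ,
        0 ≤ q2 ∧ q2 ≤ P00 ∧ 0 ≤ q4 ∧ q4 ≤ P10 ∧
        0 ≤ q7 ∧ q7 ≤ P01 ∧ 0 ≤ q8 ∧ q8 ≤ P11 ∧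
        q2 + q4 ≤ P11 * (P00 + P10) / (P01 + P11) ∧
        P10 * (P01 + P11) / (P00 + P10) ≤ q7 + q8 ∧ q7 + q8 ≤ P01 + P11 ∧
        x = q2 - q8 + P11}
      (min (P00 / (P00 + P10)) (P11 / (P01 + P11))) := by
  have hQ0 : 0 < P00 + P10 := by linarith
  have hQ1 : 0 < P01 + P11 := by linarith
  constructor
  · rcases le_total (P11 * (P00 + P10)) (P00 * (P01 + P11)) with hc | hc
    · -- min is P11/Q1
      have hmin : min (P00 / (P00 + P10)) (P11 / (P01 + P11)) = P11 / (P01 + P11) := by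
        rw [min_eq_right]
        rw [div_le_div_iff₀ hQ1 hQ0]
        linarith
      refine ⟨P11 * (P00 + P10) / (P01 + P11), 0, P10 * (P01 + P11) / (P00 + P10), 0,
        ?_, ?_, le_refl 0, h10.le, ?_, ?_, le_refl 0, h11.le, ?_, ?_, ?_, ?_⟩
      · positivity
      · rw [div_le_iff₀ hQ1]; linarith
      · positivity
      · rw [div_le_iff₀ hQ0]; nlinarith
      · linarith
      · linarith
      · rw [add_zero, div_le_iff₀ hQ0]; nlinarith
      · rw [hmin]; field_simp; ring_nf; nlinarith [mul_pos hQ0 hQ1]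
    · -- min is P00/Q0
      have hmin : min (P00 / (P00 + P10)) (P11 / (P01 + P11)) = P00 / (P00 + P10) := by
        rw [min_eq_left]
        rw [div_le_div_iff₀ hQ0 hQ1]
        linarith
      have hq8nn : 0 ≤ (P10 * P11 - P00 * P01) / (P00 + P10) := by
        apply div_nonneg _ hQ0.le; nlinarith
      refine ⟨P00, 0, P01, (P10 * P11 - P00 * P01) / (P00 + P10),
        h00.le, le_refl P00, le_refl 0, h10.le, h01.le, le_refl P01, hq8nn, ?_, ?_, ?_, ?_, ?_⟩
      · rw [div_le_iff₀ hQ0]; nlinarith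
      · rw [le_div_iff₀ hQ1]; nlinarith
      · have heq : P01 + (P10 * P11 - P00 * P01) / (P00 + P10)
            = P10 * (P01 + P11) / (P00 + P10) := by field_simp; ring
        rw [heq]
      · have h8' : (P10 * P11 - P00 * P01) / (P00 + P10) ≤ P11 := by
          rw [div_le_iff₀ hQ0]; nlinarith
        linarith
      · rw [hmin]; field_simp; ring_nf; nlinarith
  · rintro x ⟨q2, q4, q7, q8, h1, h2, h3, h4, h5, h6, h7, h8, h9, h10', h11', hx⟩
    have k9 : (q2 + q4) * (P01 + P11) ≤ P11 * (P00 + P10) := by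
      exact (le_div_iff₀ hQ1).mp h9
    have k10 : P10 * (P01 + P11) ≤ (q7 + q8) * (P00 + P10) := by
      exact (div_le_iff₀ hQ0).mp h10'
    rw [hx, le_min_iff]
    constructor
    · rw [le_div_iff₀ hQ0]; nlinarith
    · rw [le_div_iff₀ hQ1]; nlinarith
end
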